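/- Let q be a real number with 0 < q < 1, let w₁ > 0 be real, let f be a positive integer and χ a nontrivial complex Dirichlet character modulo f. Then for every complex number s ≠ 1, L_q(s, χ | w₁) = [f]_q^{−s} · Σ_{a=1}^{f} χ(a) · ζ_{q^f}( s , a·w₁/f | w₁ ), where on the right the Barnes-type Changhee q-zeta function is formed with q replaced by q^f. -/

import Mathlib

open Finset

/-- The q-analogue `[z]_q = (1 - q^z)/(1 - q)` for a real exponent `z`. -/
noncomputable def qn (q z : ℝ) : ℝ := (1 - q ^ z) / (1 - q)

/-- The complex power `r^s := exp(s·log r)` of a positive real `r` (real logarithm). -/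
noncomputable def rpowC (r : ℝ) (s : ℂ) : ℂ := Complex.exp (s * (Real.log r : ℂ))

/-- The Dirichlet-type Changhee q-L-function
`L_q(s,χ|w₁) = w₁·Σ_{m≥1} χ(m)·q^{w₁m}/[w₁m]_q^s`. -/
noncomputable def Lqw (q w1 : ℝ) {f : ℕ} (χ : DirichletCharacter ℂ f) (s : ℂ) : ℂ :=
  (w1 : ℂ) * ∑' m : ℕ, χ ((m + 1 : ℕ) : ZMod f) * ((q ^ (w1 * ((m : ℝ) + 1)) : ℝ) : ℂ)
      / rpowC (qn q (w1 * ((m : ℝ) + 1))) s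

/-- The Barnes-type Changhee q-zeta function (with base `Q`)
`ζ_Q(s,w|w₁) = -(1-Q)^s/((s-1)·log Q) + w₁·Σ_{m≥0} Q^{w₁m+w}/[w₁m+w]_Q^s`. -/
noncomputable def zetaQw (Q w w1 : ℝ) (s : ℂ) : ℂ :=
  -(rpowC (1 - Q) s) / ((s - 1) * (Real.log Q : ℂ))
    + (w1 : ℂ) * ∑' m : ℕ, ((Q ^ (w1 * (m : ℝ) + w) : ℝ) : ℂ)
        / rpowC (qn Q (w1 * (m : ℝ) + w)) s

/-!
Split the index `n ≥ 1` of the L-series by its residue modulo `f`: `n = a + f m` with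
`1 ≤ a ≤ f`. Since `w₁ n = f (w₁ m + a w₁ / f)` and `[f x]_q = [f]_q [x]_{q^f}`, the class of `a`
contributes `[f]_q^{-s} χ(a)` times the series of `ζ_{q^f}(s, a w₁ / f | w₁)`; the constant term
of `ζ` drops out because `Σ χ(a) = 0`.
-/

lemma rpowC_neg (r : ℝ) (s : ℂ) : rpowC r (-s) = (rpowC r s)⁻¹ := by
  simp only [rpowC, neg_mul, Complex.exp_neg]

lemma rpowC_mul {r₁ r₂ : ℝ} (h₁ : r₁ ≠ 0) (h₂ : r₂ ≠ 0) (s : ℂ) :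
    rpowC (r₁ * r₂) s = rpowC r₁ s * rpowC r₂ s := by
  simp only [rpowC, Real.log_mul h₁ h₂, Complex.ofReal_add, mul_add, Complex.exp_add]

lemma norm_rpowC {r : ℝ} (hr : 0 < r) (s : ℂ) : ‖rpowC r s‖ = r ^ s.re := by
  rw [rpowC, Complex.norm_exp, Real.rpow_def_of_pos hr, Complex.re_mul_ofReal, mul_comm]

lemma rpow_le_max_of_mem_Icc {a b x : ℝ} (ha : 0 < a) (hx : x ∈ Set.Icc a b) (t : ℝ) :
    x ^ t ≤ max (a ^ t) (b ^ t) := by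
  rcases le_total 0 t with ht | ht
  · exact le_max_of_le_right (Real.rpow_le_rpow (ha.trans_le hx.1).le hx.2 ht)
  · exact le_max_of_le_left (Real.rpow_le_rpow_of_nonpos ha hx.1 ht)

section qn

variable {q : ℝ}

lemma qn_pos (hq0 : 0 ≤ q) (hq1 : q < 1) {z : ℝ} (hz : 0 < z) : 0 < qn q z :=
  div_pos (sub_pos.2 (Real.rpow_lt_one hq0 hq1 hz)) (sub_pos.2 hq1)

lemma qn_le_inv_one_sub (hq0 : 0 ≤ q) (hq1 : q < 1) (z : ℝ) : qn q z ≤ (1 - q)⁻¹ := by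
  rw [qn, div_eq_mul_inv]
  exact mul_le_of_le_one_left (inv_pos.2 (sub_pos.2 hq1)).le
    (sub_le_self _ (Real.rpow_nonneg hq0 z))

lemma qn_monotone (hq0 : 0 < q) (hq1 : q < 1) : Monotone (qn q) := fun _ _ hzw =>
  div_le_div_of_nonneg_right (sub_le_sub_left (Real.rpow_le_rpow_of_exponent_ge hq0 hq1.le hzw) 1)
    (sub_pos.2 hq1).le

lemma qn_natCast_mul (hq0 : 0 ≤ q) {n : ℕ} (hqn : q ^ n ≠ 1) (x : ℝ) :
    qn q (n * x) = qn q n * qn (q ^ n) x := by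
  have hqn' : 1 - q ^ n ≠ 0 := sub_ne_zero.2 hqn.symm
  rw [qn, qn, qn, Real.rpow_mul hq0, Real.rpow_natCast, div_mul_div_comm, mul_comm (1 - q ^ n),
    mul_div_mul_right _ _ hqn']

end qn

noncomputable def changheeTerm (Q x : ℝ) (s : ℂ) : ℂ := ((Q ^ x : ℝ) : ℂ) / rpowC (qn Q x) s

lemma changheeTerm_natCast_mul {q : ℝ} (hq0 : 0 < q) (hq1 : q < 1) {n : ℕ} (hn : n ≠ 0) {x : ℝ}
    (hx : 0 < x) (s : ℂ) :
    changheeTerm q (n * x) s = rpowC (qn q n) (-s) * changheeTerm (q ^ n) x s := by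
  have hQ0 : 0 ≤ q ^ n := pow_nonneg hq0.le n
  have hQ1 : q ^ n < 1 := pow_lt_one₀ hq0.le hq1 hn
  rw [changheeTerm, changheeTerm, qn_natCast_mul hq0.le hQ1.ne,
    rpowC_mul (qn_pos hq0.le hq1 (Nat.cast_pos.2 (Nat.pos_of_ne_zero hn))).ne'
      (qn_pos hQ0 hQ1 hx).ne', rpowC_neg, Real.rpow_mul hq0.le, Real.rpow_natCast]
  ring

lemma summable_norm_changheeTerm {q w : ℝ} (hq0 : 0 < q) (hq1 : q < 1) (hw : 0 < w) (s : ℂ) :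
    Summable fun m : ℕ => ‖changheeTerm q (w * ((m : ℝ) + 1)) s‖ := by
  set r := q ^ w
  have hr0 : 0 < r := Real.rpow_pos_of_pos hq0 w
  have hr1 : r < 1 := Real.rpow_lt_one hq0.le hq1 hw
  set B := max (qn q w ^ (-s.re)) ((1 - q)⁻¹ ^ (-s.re))
  refine Summable.of_nonneg_of_le (fun _ => norm_nonneg _) (fun m => ?_)
    ((summable_geometric_of_lt_one hr0.le hr1).mul_left (B * r))
  have hwm : w ≤ w * ((m : ℝ) + 1) :=
    le_mul_of_one_le_right hw.le (le_add_of_nonneg_left m.cast_nonneg)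
  have hqn : qn q (w * ((m : ℝ) + 1)) ∈ Set.Icc (qn q w) (1 - q)⁻¹ :=
    ⟨qn_monotone hq0 hq1 hwm, qn_le_inv_one_sub hq0.le hq1 _⟩
  have hpow : q ^ (w * ((m : ℝ) + 1)) = r * r ^ m := by
    rw [Real.rpow_mul hq0.le, Real.rpow_add_one hr0.ne', Real.rpow_natCast, mul_comm]
  rw [changheeTerm, div_eq_mul_inv, ← rpowC_neg, norm_mul,
    norm_rpowC (qn_pos hq0.le hq1 (hw.trans_le hwm)), Complex.norm_real,
    Real.norm_of_nonneg (Real.rpow_nonneg hq0.le _), hpow, Complex.neg_re, mul_comm, mul_assoc]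
  exact mul_le_mul_of_nonneg_right (rpow_le_max_of_mem_Icc (qn_pos hq0.le hq1 hw) hqn _)
    (by positivity)

lemma tsum_eq_sum_range_tsum {R : Type*} [AddCommGroup R] [UniformSpace R] [IsUniformAddGroup R]
    [CompleteSpace R] [T0Space R] {F : ℕ → R} (hF : Summable F) (N : ℕ) [NeZero N] :
    ∑' n, F n = ∑ a ∈ range N, ∑' m, F (a + N * m) := by
  obtain ⟨k, rfl⟩ : ∃ k, N = k + 1 := Nat.exists_eq_succ_of_ne_zero (NeZero.ne N)
  exact (Nat.sumByResidueClasses hF (k + 1)).trans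
    (Fin.sum_univ_eq_sum_range (fun a => ∑' m, F (a + (k + 1) * m)) (k + 1))

lemma sum_mul_zetaQw_of_sum_eq_zero {Q w1 : ℝ} {s : ℂ} {N : ℕ} {c : ℕ → ℂ} (w : ℕ → ℝ)
    (hc : ∑ a ∈ range N, c a = 0) :
    ∑ a ∈ range N, c a * zetaQw Q (w a) w1 s
      = w1 * ∑ a ∈ range N, c a * ∑' m : ℕ, changheeTerm Q (w1 * m + w a) s := by
  simp only [zetaQw, changheeTerm, mul_add, sum_add_distrib, ← sum_mul, hc, zero_mul, zero_add,
    mul_sum]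
  exact sum_congr rfl fun _ _ => by ring

lemma Lqw_eq_tsum (q w1 : ℝ) {f : ℕ} (χ : DirichletCharacter ℂ f) (s : ℂ) :
    Lqw q w1 χ s
      = w1 * ∑' m : ℕ, χ ((m + 1 : ℕ) : ZMod f) * changheeTerm q (w1 * ((m : ℝ) + 1)) s := by
  simp only [Lqw, changheeTerm, mul_div_assoc]

section summand

variable {q w1 : ℝ} (hq0 : 0 < q) (hq1 : q < 1) (hw1 : 0 < w1) {f : ℕ} (χ : DirichletCharacter ℂ f)
  (s : ℂ)
include hq0 hq1 hw1

lemma summable_Lqw_summand :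
    Summable fun m : ℕ => χ ((m + 1 : ℕ) : ZMod f) * changheeTerm q (w1 * ((m : ℝ) + 1)) s :=
  (summable_norm_changheeTerm hq0 hq1 hw1 s).of_norm_bounded fun m => by
    rw [norm_mul]
    exact mul_le_of_le_one_left (norm_nonneg _) (χ.norm_le_one _)

lemma Lqw_summand_add_mul (hf : f ≠ 0) (a m : ℕ) :
    χ ((a + f * m + 1 : ℕ) : ZMod f) * changheeTerm q (w1 * (((a + f * m : ℕ) : ℝ) + 1)) s
      = rpowC (qn q f) (-s)
        * (χ ((a + 1 : ℕ) : ZMod f) * changheeTerm (q ^ f) (w1 * m + (a + 1) * w1 / f) s) := by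
  have hχ_periodic : ((a + f * m + 1 : ℕ) : ZMod f) = ((a + 1 : ℕ) : ZMod f) := by
    push_cast [ZMod.natCast_self]
    ring
  have hexp : w1 * (((a + f * m : ℕ) : ℝ) + 1) = f * (w1 * m + (a + 1) * w1 / f) := by
    push_cast
    field_simp
    ring
  rw [hχ_periodic, hexp, changheeTerm_natCast_mul hq0 hq1 hf (by positivity)]
  ring

end summand

theorem Lqw_eq_sum_zetaQw_general (q w1 : ℝ) (hq0 : 0 < q) (hq1 : q < 1) (hw1 : 0 < w1)
    (f : ℕ) (hf : 0 < f) (χ : DirichletCharacter ℂ f)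
    (hχ : ∑ a ∈ range f, χ ((a + 1 : ℕ) : ZMod f) = 0)
    (s : ℂ) :
    Lqw q w1 χ s = rpowC (qn q (f : ℝ)) (-s)
      * ∑ a ∈ range f, χ ((a + 1 : ℕ) : ZMod f)
        * zetaQw (q ^ f) (((a : ℝ) + 1) * w1 / (f : ℝ)) w1 s := by
  have : NeZero f := ⟨hf.ne'⟩
  rw [Lqw_eq_tsum, tsum_eq_sum_range_tsum (summable_Lqw_summand hq0 hq1 hw1 χ s) f,
    sum_mul_zetaQw_of_sum_eq_zero _ hχ, mul_sum, mul_sum, mul_sum]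
  refine sum_congr rfl fun a _ => ?_
  simp only [Lqw_summand_add_mul hq0 hq1 hw1 χ s hf.ne', tsum_mul_left]
  ring

/-- Relation between the Dirichlet-type Changhee q-L-function and the Barnes-type
Changhee q-zeta function built from `q^f`:
`L_q(s,χ|w₁) = [f]_q^{-s} · Σ_{a=1}^{f} χ(a) · ζ_{q^f}(s, a·w₁/f | w₁)`. -/
theorem Lqw_eq_sum_zetaQw (q w1 : ℝ) (hq0 : 0 < q) (hq1 : q < 1) (hw1 : 0 < w1)
    (f : ℕ) (hf : 0 < f) (χ : DirichletCharacter ℂ f)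
    (hχ : ∑ a ∈ range f, χ ((a + 1 : ℕ) : ZMod f) = 0)
    (s : ℂ) (hs : s ≠ 1) :
    Lqw q w1 χ s = rpowC (qn q (f : ℝ)) (-s)
      * ∑ a ∈ range f, χ ((a + 1 : ℕ) : ZMod f)
        * zetaQw (q ^ f) (((a : ℝ) + 1) * w1 / (f : ℝ)) w1 s :=
  Lqw_eq_sum_zetaQw_general q w1 hq0 hq1 hw1 f hf χ hχ s
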